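/- Let k ≥ 1 be an integer and x, s real numbers. Then for every natural number n, L_n^{(k)}(x, s) = k·F_{n+1}^{(k)}(x, s) − (k−1)·x·F_n^{(k)}(x, s). -/
import Mathlib


/-- The generalized Fibonacci polynomials `F_n^{(k)}(x, s)`:
`F_0 = 0`, `F_n = x^(n-1)` for `0 < n < k`, and `F_n = x·F_{n-1} + s·F_{n-k}` for `n ≥ k`
(for `n = k` the recurrence gives `F_k = x^(k-1)`, so we may use `x^(n-1)` for all `0 < n ≤ k`;
this also gives the correct value `F_1 = 1` in the degenerate case `k = 1`). -/
noncomputable def Fk (k : ℕ) (x s : ℝ) : ℕ → ℝ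
  | n =>
    if n = 0 then 0
    else if n ≤ k then x ^ (n - 1)
    else if k = 0 then 0
    else x * Fk k x s (n - 1) + s * Fk k x s (n - k)
  termination_by n => n
  decreasing_by all_goals omega

/-- The generalized Lucas polynomials `L_n^{(k)}(x, s)`:
`L_0 = k`, `L_n = x^n` for `0 < n < k`, and `L_n = x·L_{n-1} + s·L_{n-k}` for `n ≥ k`. -/
noncomputable def Lk (k : ℕ) (x s : ℝ) : ℕ → ℝ
  | n =>
    if n = 0 then (k : ℝ)
    else if n < k then x ^ n
    else if k = 0 then 0
    else x * Lk k x s (n - 1) + s * Lk k x s (n - k)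
  termination_by n => n
  decreasing_by all_goals omega

lemma Fk_zero (k : ℕ) (x s : ℝ) : Fk k x s 0 = 0 := by rw [Fk]; simp

lemma Fk_small (k : ℕ) (x s : ℝ) (n : ℕ) (h1 : 0 < n) (h2 : n ≤ k) :
    Fk k x s n = x ^ (n - 1) := by rw [Fk]; rw [if_neg (by omega), if_pos h2]

lemma Fk_rec (k : ℕ) (x s : ℝ) (n : ℕ) (hk : 2 ≤ k) (h : k ≤ n) :
    Fk k x s n = x * Fk k x s (n - 1) + s * Fk k x s (n - k) := by
  rcases eq_or_lt_of_le h with h | h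
  · subst h
    rw [Fk_small k x s k (by omega) le_rfl, Fk_small k x s (k-1) (by omega) (by omega),
      Nat.sub_self, Fk_zero]
    rw [mul_zero, add_zero, ← pow_succ']
    congr 1; omega
  · rw [Fk]
    simp only [if_neg (by omega : ¬ n = 0), if_neg (by omega : ¬ n ≤ k),
      if_neg (by omega : ¬ k = 0)]

lemma Lk_zero (k : ℕ) (x s : ℝ) : Lk k x s 0 = (k : ℝ) := by rw [Lk]; simp

lemma Lk_small (k : ℕ) (x s : ℝ) (n : ℕ) (h1 : 0 < n) (h2 : n < k) :
    Lk k x s n = x ^ n := by rw [Lk]; rw [if_neg (by omega), if_pos h2]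

lemma Fk_rec' (k : ℕ) (x s : ℝ) (n : ℕ) (hk : 1 ≤ k) (h : k < n) :
    Fk k x s n = x * Fk k x s (n - 1) + s * Fk k x s (n - k) := by
  rw [Fk]
  simp only [if_neg (by omega : ¬ n = 0), if_neg (by omega : ¬ n ≤ k),
    if_neg (by omega : ¬ k = 0)]

lemma Lk_rec (k : ℕ) (x s : ℝ) (n : ℕ) (hk : 1 ≤ k) (h : k ≤ n) :
    Lk k x s n = x * Lk k x s (n - 1) + s * Lk k x s (n - k) := by
  rw [Lk]
  simp only [if_neg (by omega : ¬ n = 0), if_neg (by omega : ¬ n < k),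
    if_neg (by omega : ¬ k = 0)]

theorem stmt10 (k : ℕ) (hk : 1 ≤ k) (x s : ℝ) (n : ℕ) :
    Lk k x s n = (k : ℝ) * Fk k x s (n + 1) - ((k : ℝ) - 1) * x * Fk k x s n := by
  induction n using Nat.strong_induction_on with
  | _ n ih =>
  rcases Nat.eq_or_lt_of_le hk with hk1 | hk2
  · -- k = 1
    subst hk1
    rcases Nat.eq_zero_or_pos n with rfl | hn
    · rw [Lk_zero, Fk_zero, Fk_small 1 x s 1 one_pos le_rfl]; norm_num
    · rw [Lk_rec 1 x s n le_rfl hn, Fk_rec' 1 x s (n+1) le_rfl (by omega),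
        Nat.add_sub_cancel]
      have h1 := ih (n-1) (by omega)
      have e : n - 1 + 1 = n := by omega
      rw [e] at h1
      rw [h1]
      push_cast
      ring
  · -- k ≥ 2
    rcases Nat.eq_zero_or_pos n with rfl | hn
    · rw [Lk_zero, Fk_zero, Fk_small k x s 1 one_pos hk]; simp
    rcases lt_or_ge n k with h | h
    · rw [Lk_small k x s n hn h, Fk_small k x s n hn h.le,
        Fk_small k x s (n+1) (by omega) (by omega)]
      have : x ^ n = x * x ^ (n - 1) := by
        rw [← pow_succ']; congr 1; omega
      rw [Nat.add_sub_cancel]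
      ring_nf
      nlinarith [this]
    · rw [Lk_rec k x s n hk h, ih (n-1) (by omega), ih (n-k) (by omega),
        Fk_rec k x s (n+1) hk2 (by omega),
        Fk_rec k x s n hk2 h]
      have e1 : n - 1 + 1 = n := by omega
      have e2 : n - k + 1 = n + 1 - k := by omega
      have e0 : n + 1 - 1 = n := by omega
      rw [e0, e1, e2]
      ring
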